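/- Let P be a well-founded tree and n, k < ω. For 0 < n, let E_n(P) = {(t_0,…,t_{n-1},t_n) : t_0 < … < t_{n-1} ≤ t_n, t_n ∈ Leaves(P)}, let E_0(P) = Leaves(P), let Λ_n(P) = {(t_0,…,t_{n-1}) : t_0 < … < t_{n-1} in P}, and let Λ_0(P) = {∅}. Then for any function f : E_n(P) → {0,…,k} there exist a subtree Q of P with rank(Q) = rank(P) and τ_Q = τ_P restricted to Q, and a function F : Λ_n(Q) → {0,…,k}, such that F(t_0,…,t_{n-1}) = f(t_0,…,t_{n-1},t_n) for every (t_0,…,t_{n-1},t_n) ∈ E_n(Q) (in the case n = 0, this says f is constant with value F(∅) on Leaves(Q)). -/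

import Mathlib

open Ordinal Set

universe u

/-- The set of maximal elements ("leaves") of `P`. -/
def treeLeaves {α : Type u} [PartialOrder α] (P : Set α) : Set α :=
  {t ∈ P | ∀ s ∈ P, ¬ t < s}

/-- The derivative `P' = P \ Leaves P`. -/
def treeDeriv {α : Type u} [PartialOrder α] (P : Set α) : Set α :=
  P \ treeLeaves P

/-- The transfinite iterated derivative `P^ξ`. -/
noncomputable def derivIter {α : Type u} [PartialOrder α] (P : Set α) (ξ : Ordinal.{u}) :
    Set α :=
  Ordinal.limitRecOn ξ P (fun _ ih => treeDeriv ih)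
    (fun o _ ih => ⋂ (ζ : Set.Iio o), ih ζ.1 ζ.2)

/-- `P` is a tree: every ancestor set is well-ordered (a well-founded chain). -/
def IsTree {α : Type u} [PartialOrder α] (P : Set α) : Prop :=
  ∀ t ∈ P, IsChain (· ≤ ·) {s ∈ P | s ≤ t} ∧ {s ∈ P | s ≤ t}.WellFoundedOn (· < ·)

/-- `P` is well-founded: some transfinite derivative is empty. -/
def IsWFTree {α : Type u} [PartialOrder α] (P : Set α) : Prop :=
  ∃ ξ : Ordinal.{u}, derivIter P ξ = ∅

/-- The rank of a well-founded tree: the least `ξ` with `P^ξ = ∅`. -/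
noncomputable def treeRank {α : Type u} [PartialOrder α] (P : Set α) : Ordinal.{u} :=
  sInf {ξ | derivIter P ξ = ∅}

/-- `τ_P(t)`: the largest ordinal `ξ` with `t ∈ P^ξ`. -/
noncomputable def treeTau {α : Type u} [PartialOrder α] (P : Set α) (t : α) : Ordinal.{u} :=
  sSup {ξ | t ∈ derivIter P ξ}

/-- `τ_{P,β}(t)`: the largest ordinal `ξ` with `t ∈ P^{β·ξ}`. -/
noncomputable def treeTauMul {α : Type u} [PartialOrder α] (P : Set α) (β : Ordinal.{u})
    (t : α) : Ordinal.{u} :=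
  sSup {ξ | t ∈ derivIter P (β * ξ)}

/-- `alpProd ε i = ω^{ω^{ε 0}} · ⋯ · ω^{ω^{ε i}}`. -/
noncomputable def alpProd (ε : ℕ → Ordinal.{u}) : ℕ → Ordinal.{u}
  | 0 => omega0 ^ omega0 ^ ε 0
  | (i + 1) => alpProd ε i * omega0 ^ omega0 ^ ε (i + 1)

/-- The separation function `ς_P` of a tree whose rank has decomposition
`ω^{ω^{ε 0}} ⋯ ω^{ω^{ε l}}`: the least `i` such that `s, t` lie in the same block
`P^{α_i·δ} \ P^{α_i·(δ+1)}` for some ordinal `δ`. -/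
noncomputable def sep {α : Type u} [PartialOrder α] (P : Set α) (ε : ℕ → Ordinal.{u})
    (s t : α) : ℕ :=
  sInf {i : ℕ | ∃ δ : Ordinal.{u},
    s ∈ derivIter P (alpProd ε i * δ) \ derivIter P (alpProd ε i * (δ + 1)) ∧
    t ∈ derivIter P (alpProd ε i * δ) \ derivIter P (alpProd ε i * (δ + 1))}

/-- `indProd ε A l = ω^{ω^{ε 0}·1_A(0)} ⋯ ω^{ω^{ε l}·1_A(l)}`. -/
noncomputable def indProd (ε : ℕ → Ordinal.{u}) (A : Set ℕ) : ℕ → Ordinal.{u}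
  | 0 => omega0 ^ (omega0 ^ ε 0 * A.indicator (fun _ => (1 : Ordinal.{u})) 0)
  | (i + 1) => indProd ε A i *
      omega0 ^ (omega0 ^ ε (i + 1) * A.indicator (fun _ => (1 : Ordinal.{u})) (i + 1))

/-- `sumPow ε i = ω^{ε 0} + ⋯ + ω^{ε (i-1)}` (the partial sums `γ_i`). -/
noncomputable def sumPow (ε : ℕ → Ordinal.{u}) : ℕ → Ordinal.{u}
  | 0 => 0
  | (i + 1) => sumPow ε i + omega0 ^ ε i

/-- `indSum ε A i = Σ_{n < i} 1_A(n)·ω^{ε n}`. -/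
noncomputable def indSum (ε : ℕ → Ordinal.{u}) (A : Set ℕ) : ℕ → Ordinal.{u}
  | 0 => 0
  | (i + 1) => indSum ε A i + A.indicator (fun _ => (1 : Ordinal.{u})) i * omega0 ^ ε i

/-!
Call `Q ⊆ P` *τ-cofinal* if for every `x ∈ Q` and every `ζ < τ_P(x)` some `y > x` in `Q` has
`τ_P(y) ≥ ζ`. Then `Q^ξ = {x ∈ Q | ξ ≤ τ_P(x)}` for all `ξ`, so `τ_Q = τ_P` on `Q`, the leaves of
`Q` have `τ_P = 0`, and `Q` has the rank of `P` as soon as every `τ_P(t)`, `t ∈ P`, is bounded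
by some `τ_P(r)`, `r ∈ Q`.

By induction on `τ_P(t)` we build above every node `t` a τ-cofinal cone `Q_t ∋ t` and a colouring
`F_t` of chains with `f(w, ℓ) = F_t(w)` for every leaf `ℓ ∈ Q_t` and every chain `w` below `ℓ`.
The ancestors of `t` form a chain that is well-ordered in both directions, hence a finite set, so
the children `s` of `t` produce only finitely many restrictions of `F_s` to chains below `t`. By
pigeonhole one of them occurs for children of arbitrarily large `τ_P` below `τ_P(t)`; the cones
over those children share no chains other than chains below `t`, so their colourings glue. Gluing
the cones over the roots in the same way gives `Q`.
-/

lemma exists_cofinal_fiber {ι β γ : Type*} [Finite β] [Nonempty β] [LinearOrder γ]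
    (c : ι → β) (g : ι → γ) {S : Set ι} {Z : Set γ} (h : ∀ z ∈ Z, ∃ i ∈ S, z ≤ g i) :
    ∃ b, ∀ z ∈ Z, ∃ i ∈ S, c i = b ∧ z ≤ g i := by
  by_contra! hbad
  choose z hzZ hz using hbad
  obtain ⟨b₀, hb₀⟩ := Finite.exists_max z
  obtain ⟨i, hiS, hi⟩ := h _ (hzZ b₀)
  exact ((hb₀ (c i)).trans hi).not_gt (hz (c i) i hiS rfl)

section Derivatives

variable {α : Type u} [PartialOrder α] (P : Set α)

lemma mem_treeDeriv {X : Set α} {t : α} : t ∈ treeDeriv X ↔ t ∈ X ∧ ∃ s ∈ X, t < s := by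
  simp [treeDeriv, treeLeaves]

lemma derivIter_zero : derivIter P 0 = P := by
  simp [derivIter]

lemma derivIter_add_one (ξ : Ordinal.{u}) :
    derivIter P (ξ + 1) = treeDeriv (derivIter P ξ) := by
  simp [derivIter]

lemma derivIter_limit {o : Ordinal.{u}} (ho : Order.IsSuccLimit o) :
    derivIter P o = ⋂ ζ : Iio o, derivIter P ζ := by
  rw [derivIter, Ordinal.limitRecOn_limit (h := ho)]
  rfl

lemma derivIter_antitone : Antitone (derivIter P) := by
  intro ξ η hξη
  induction η using Ordinal.limitRecOn with
  | zero => rw [nonpos_iff_eq_zero.mp hξη]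
  | add_one η ih =>
    rcases hξη.lt_or_eq with hlt | rfl
    · rw [derivIter_add_one]
      exact sdiff_subset.trans (ih (Order.lt_add_one_iff.mp hlt))
    · rfl
  | limit η hη _ =>
    rcases hξη.lt_or_eq with hlt | rfl
    · rw [derivIter_limit P hη]
      exact iInter_subset _ (⟨ξ, hlt⟩ : Iio η)
    · rfl

lemma derivIter_subset (ξ : Ordinal.{u}) : derivIter P ξ ⊆ P :=
  (derivIter_antitone P zero_le).trans (derivIter_zero P).subset

lemma mem_derivIter_of_lt {t s : α} (ht : t ∈ P) (hts : t < s) {ξ : Ordinal.{u}}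
    (hs : s ∈ derivIter P ξ) : t ∈ derivIter P ξ := by
  induction ξ using Ordinal.limitRecOn with
  | zero => rwa [derivIter_zero]
  | add_one ξ ih =>
    rw [derivIter_add_one, mem_treeDeriv] at hs ⊢
    exact ⟨ih hs.1, s, hs.1, hts⟩
  | limit ξ hξ ih =>
    rw [derivIter_limit P hξ, mem_iInter] at hs ⊢
    exact fun ζ => ih ζ.1 ζ.2 (hs ζ)

end Derivatives

section Tau

variable {α : Type u} [PartialOrder α] {P : Set α}

lemma bddAbove_setOf_mem_derivIter (hWF : IsWFTree P) (t : α) :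
    BddAbove {ξ | t ∈ derivIter P ξ} := by
  obtain ⟨ξ₀, hξ₀⟩ := hWF
  refine ⟨ξ₀, fun ξ hξ => le_of_not_gt fun h => ?_⟩
  simpa [hξ₀] using derivIter_antitone P h.le hξ

lemma mem_derivIter_treeTau {t : α} (ht : t ∈ P) :
    t ∈ derivIter P (treeTau P t) := by
  have hne : {ξ | t ∈ derivIter P ξ}.Nonempty := ⟨0, by rwa [mem_ofPred_eq, derivIter_zero]⟩
  have below : ∀ ζ < treeTau P t, t ∈ derivIter P (ζ + 1) := fun ζ hζ => by
    obtain ⟨ξ, hξ, hζξ⟩ := exists_lt_of_lt_csSup hne hζ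
    exact derivIter_antitone P (Order.add_one_le_of_lt hζξ) hξ
  rcases Ordinal.zero_or_succ_or_isSuccLimit (treeTau P t) with h | ⟨a, ha⟩ | hlim
  · rwa [h, derivIter_zero]
  · rw [← ha, Order.succ_eq_add_one]
    exact below a (ha ▸ Order.lt_succ a)
  · rw [derivIter_limit P hlim, mem_iInter]
    exact fun ζ => derivIter_antitone P (Order.le_succ ζ.1) (below ζ ζ.2)

lemma mem_derivIter_iff (hWF : IsWFTree P) {t : α} (ht : t ∈ P) {ξ : Ordinal.{u}} :
    t ∈ derivIter P ξ ↔ ξ ≤ treeTau P t :=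
  ⟨fun h => le_csSup (bddAbove_setOf_mem_derivIter hWF t) h,
    fun h => derivIter_antitone P h (mem_derivIter_treeTau ht)⟩

lemma strictAntiOn_treeTau (hWF : IsWFTree P) : StrictAntiOn (treeTau P) P := by
  intro t ht s hs hts
  have hsτ := mem_derivIter_treeTau hs
  have : t ∈ derivIter P (treeTau P s + 1) := by
    rw [derivIter_add_one, mem_treeDeriv]
    exact ⟨mem_derivIter_of_lt P ht hts hsτ, s, hsτ, hts⟩
  exact Order.add_one_le_iff.mp ((mem_derivIter_iff hWF ht).1 this)

end Tau

section Tree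

variable {α : Type u} [PartialOrder α] {P A S : Set α}

lemma IsTree.le_total_of_le (hP : IsTree P) {x a b : α} (hx : x ∈ P) (ha : a ∈ P) (hb : b ∈ P)
    (hax : a ≤ x) (hbx : b ≤ x) : a ≤ b ∨ b ≤ a :=
  (hP x hx).1.total ⟨ha, hax⟩ ⟨hb, hbx⟩

lemma finite_ancestors (hP : IsTree P) (hWF : IsWFTree P) {t : α} (ht : t ∈ P) :
    {s ∈ P | s ≤ t}.Finite := by
  classical
  obtain ⟨hchain, hwf⟩ := hP t ht
  let := hchain.linearOrder
  have : WellFoundedLT {s ∈ P | s ≤ t} := ⟨hwf⟩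
  have : WellFoundedGT {s ∈ P | s ≤ t} :=
    StrictAnti.wellFoundedGT (f := fun s => treeTau P s.1)
      fun a b hab => strictAntiOn_treeTau hWF a.2.1 b.2.1 hab
  exact Set.finite_coe_iff.mp (Finite.of_wellFoundedLT_wellFoundedGT _)

def treeChildren (P : Set α) (t : α) : Set α :=
  {s ∈ P | t < s ∧ ∀ v ∈ P, v < s → v ≤ t}

lemma exists_mem_treeChildren_le_treeTau (hP : IsTree P) (hWF : IsWFTree P) {t : α} (ht : t ∈ P)
    {ζ : Ordinal.{u}} (hζ : ζ < treeTau P t) : ∃ s ∈ treeChildren P t, ζ ≤ treeTau P s := by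
  have htζ : t ∈ treeDeriv (derivIter P ζ) := by
    rw [← derivIter_add_one, mem_derivIter_iff hWF ht]
    exact Order.add_one_le_of_lt hζ
  obtain ⟨-, s', hs'ζ, hts'⟩ := mem_treeDeriv.1 htζ
  have hs' := derivIter_subset P ζ hs'ζ
  obtain ⟨hchain, hwf⟩ := hP s' hs'
  obtain ⟨s, ⟨hs, hts, hss'⟩, hmin⟩ :=
    (hwf.subset fun y (hy : y ∈ P ∧ t < y ∧ y ≤ s') => ⟨hy.1, hy.2.2⟩).exists_minimal
      ⟨s', hs', hts', le_rfl⟩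
  refine ⟨s, ⟨hs, hts, fun v hv hvs => ?_⟩, ?_⟩
  · rcases hchain.total ⟨hv, hvs.le.trans hss'⟩ ⟨ht, hts'.le⟩ with hvt | htv
    · exact hvt
    · rcases htv.lt_or_eq with htv | rfl
      · exact absurd (hmin ⟨hv, htv, hvs.le.trans hss'⟩ hvs.le) hvs.not_ge
      · exact le_rfl
  · calc ζ ≤ treeTau P s' := (mem_derivIter_iff hWF hs').1 hs'ζ
      _ ≤ treeTau P s := (strictAntiOn_treeTau hWF).antitoneOn hs hs' hss'

lemma exists_minimal_le (hP : IsTree P) {t : α} (ht : t ∈ P) :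
    ∃ r, Minimal (· ∈ P) r ∧ r ≤ t := by
  obtain ⟨r, ⟨hr, hrt⟩, hmin⟩ := (hP t ht).2.exists_minimal ⟨t, ht, le_rfl⟩
  exact ⟨r, ⟨hr, fun y hy hyr => hmin ⟨hy, hyr.trans hrt⟩ hyr⟩, hrt⟩

/-- Models the children of `t` (over `{v ∈ P | v ≤ t}`) and the roots of `P` (over `∅`). -/
structure IsLevelAbove (P A S : Set α) : Prop where
  subset : S ⊆ P
  notMem : ∀ s ∈ S, s ∉ A
  mem_of_lt : ∀ s ∈ S, ∀ v ∈ P, v < s → v ∈ A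

lemma IsLevelAbove.le_of_notMem (hS : IsLevelAbove P A S) (hP : IsTree P) {s x v : α}
    (hs : s ∈ S) (hx : x ∈ P) (hv : v ∈ P) (hsx : s ≤ x) (hvx : v ≤ x) (hvA : v ∉ A) : s ≤ v := by
  rcases hP.le_total_of_le hx (hS.subset hs) hv hsx hvx with hsv | hvs
  · exact hsv
  · rcases hvs.lt_or_eq with hvs | rfl
    · exact absurd (hS.mem_of_lt s hs v hv hvs) hvA
    · exact le_rfl

lemma IsLevelAbove.eq_of_le_of_le (hS : IsLevelAbove P A S) (hP : IsTree P) {s s' v : α}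
    (hs : s ∈ S) (hs' : s' ∈ S) (hv : v ∈ P) (hsv : s ≤ v) (hs'v : s' ≤ v) : s = s' := by
  rcases hP.le_total_of_le hv (hS.subset hs) (hS.subset hs') hsv hs'v with h | h
  · rcases h.lt_or_eq with h | h
    · exact absurd (hS.mem_of_lt s' hs' s (hS.subset hs) h) (hS.notMem s hs)
    · exact h
  · rcases h.lt_or_eq with h | h
    · exact absurd (hS.mem_of_lt s hs s' (hS.subset hs') h) (hS.notMem s' hs')
    · exact h.symm

lemma IsLevelAbove.eq_or_mem (hS : IsLevelAbove P A S) (hP : IsTree P) {s s' x x' v : α}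
    (hs : s ∈ S) (hs' : s' ∈ S) (hx : x ∈ P) (hx' : x' ∈ P) (hsx : s ≤ x) (hs'x' : s' ≤ x')
    (hv : v ∈ P) (hvx : v ≤ x) (hvx' : v ≤ x') : s = s' ∨ v ∈ A := by
  by_contra! ⟨hne, hvA⟩
  exact hne (hS.eq_of_le_of_le hP hs hs' hv (hS.le_of_notMem hP hs hx hv hsx hvx hvA)
    (hS.le_of_notMem hP hs' hx' hv hs'x' hvx' hvA))

lemma isLevelAbove_treeChildren (t : α) : IsLevelAbove P {v ∈ P | v ≤ t} (treeChildren P t) where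
  subset _ hs := hs.1
  notMem _ hs hst := hs.2.1.not_ge hst.2
  mem_of_lt _ hs v hv hvs := ⟨hv, hs.2.2 v hv hvs⟩

lemma isLevelAbove_minimal : IsLevelAbove P ∅ {r | Minimal (· ∈ P) r} where
  subset _ hr := hr.1
  notMem _ _ := notMem_empty _
  mem_of_lt _ hr _ hv hvr := hr.not_lt hv hvr

end Tree

section TauCofinal

variable {α : Type u} [PartialOrder α] {P Q : Set α}

def IsTauCofinal (P Q : Set α) : Prop :=
  Q ⊆ P ∧ ∀ x ∈ Q, ∀ ζ < treeTau P x, ∃ y ∈ Q, x < y ∧ ζ ≤ treeTau P y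

lemma IsTauCofinal.derivIter_eq (hWF : IsWFTree P) (hQ : IsTauCofinal P Q) (ξ : Ordinal.{u}) :
    derivIter Q ξ = {t ∈ Q | ξ ≤ treeTau P t} := by
  induction ξ using Ordinal.limitRecOn with
  | zero => simp [derivIter_zero]
  | add_one ξ ih =>
    ext t
    simp only [derivIter_add_one, mem_treeDeriv, ih, mem_ofPred_eq, Order.add_one_le_iff]
    constructor
    · rintro ⟨⟨htQ, -⟩, s, ⟨hsQ, hξs⟩, hts⟩
      exact ⟨htQ, hξs.trans_lt (strictAntiOn_treeTau hWF (hQ.1 htQ) (hQ.1 hsQ) hts)⟩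
    · rintro ⟨htQ, hξt⟩
      obtain ⟨s, hsQ, hts, hξs⟩ := hQ.2 t htQ ξ hξt
      exact ⟨⟨htQ, hξt.le⟩, s, ⟨hsQ, hξs⟩, hts⟩
  | limit o ho ih =>
    ext t
    have hmem : ∀ ζ < o, t ∈ derivIter Q ζ ↔ t ∈ Q ∧ ζ ≤ treeTau P t := fun ζ hζ => by
      rw [ih ζ hζ]; rfl
    simp only [derivIter_limit Q ho, mem_iInter, Subtype.forall, mem_Iio, mem_ofPred_eq,
      ho.le_iff_forall_le]
    exact ⟨fun h => ⟨((hmem 0 ho.bot_lt).1 (h 0 ho.bot_lt)).1,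
        fun ζ hζ => ((hmem ζ hζ).1 (h ζ hζ)).2⟩,
      fun h ζ hζ => (hmem ζ hζ).2 ⟨h.1, h.2 ζ hζ⟩⟩

lemma IsTauCofinal.treeTau_eq (hWF : IsWFTree P) (hQ : IsTauCofinal P Q) {t : α} (ht : t ∈ Q) :
    treeTau Q t = treeTau P t := by
  have : {ξ | t ∈ derivIter Q ξ} = Iic (treeTau P t) := by
    ext ξ
    simp [hQ.derivIter_eq hWF, ht]
  rw [treeTau, this, csSup_Iic]

lemma IsTauCofinal.treeRank_eq (hWF : IsWFTree P) (hQ : IsTauCofinal P Q)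
    (hcof : ∀ t ∈ P, ∃ r ∈ Q, treeTau P t ≤ treeTau P r) : treeRank Q = treeRank P := by
  suffices ∀ ξ, derivIter Q ξ = ∅ ↔ derivIter P ξ = ∅ by
    simp only [treeRank, this]
  intro ξ
  simp only [hQ.derivIter_eq hWF, eq_empty_iff_forall_notMem, mem_ofPred_eq, not_and, not_le]
  refine ⟨fun h t ht => ?_, fun h t ht => ?_⟩
  · have htP := derivIter_subset P ξ ht
    obtain ⟨r, hr, htr⟩ := hcof t htP
    exact (h r hr).not_ge (((mem_derivIter_iff hWF htP).1 ht).trans htr)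
  · exact lt_of_not_ge fun hξ => h t ((mem_derivIter_iff hWF (hQ.1 ht)).2 hξ)

lemma IsTauCofinal.treeTau_eq_zero (hQ : IsTauCofinal P Q) {t : α} (ht : t ∈ treeLeaves Q) :
    treeTau P t = 0 := by
  by_contra h
  obtain ⟨s, hs, hts, -⟩ := hQ.2 t ht.1 0 (pos_iff_ne_zero.mpr h)
  exact ht.2 s hs hts

lemma IsTauCofinal.biUnion {ι : Type*} {I : Set ι} {Q : ι → Set α}
    (hQ : ∀ i ∈ I, IsTauCofinal P (Q i)) : IsTauCofinal P (⋃ i ∈ I, Q i) := by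
  refine ⟨iUnion₂_subset fun i hi => (hQ i hi).1, fun x hx ζ hζ => ?_⟩
  obtain ⟨i, hi, hxi⟩ := mem_iUnion₂.1 hx
  obtain ⟨y, hy, hxy, hζy⟩ := (hQ i hi).2 x hxi ζ hζ
  exact ⟨y, mem_iUnion₂.2 ⟨i, hi, hy⟩, hxy, hζy⟩

lemma IsTauCofinal.insert {Q : Set α} (hQ : IsTauCofinal P Q) {t : α} (ht : t ∈ P)
    (hcof : ∀ ζ < treeTau P t, ∃ s ∈ Q, t < s ∧ ζ ≤ treeTau P s) :
    IsTauCofinal P (insert t Q) := by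
  refine ⟨insert_subset ht hQ.1, ?_⟩
  rintro x (rfl | hx) ζ hζ
  · obtain ⟨s, hs, hxs, hζs⟩ := hcof ζ hζ
    exact ⟨s, mem_insert_of_mem _ hs, hxs, hζs⟩
  · obtain ⟨y, hy, hxy, hζy⟩ := hQ.2 x hx ζ hζ
    exact ⟨y, mem_insert_of_mem _ hy, hxy, hζy⟩

end TauCofinal

section Coloring

variable {α : Type u} [PartialOrder α] {P : Set α} {n k : ℕ}
  (f : (Fin (n + 1) → α) → Fin (k + 1))

def strictChainsIn (A : Set α) (n : ℕ) : Set (Fin n → α) :=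
  {w | StrictMono w ∧ ∀ i, w i ∈ A}

lemma finite_strictChainsIn {A : Set α} (hA : A.Finite) : (strictChainsIn A n).Finite :=
  (Set.Finite.pi' fun _ => hA).subset fun _ hw => hw.2

/-- Leaves are recognised by `τ_P ℓ = 0`, which for τ-cofinal `Q` means `ℓ ∈ treeLeaves Q`. -/
def FactorsOnLeaves (P : Set α) (Q : Set α) (F : (Fin n → α) → Fin (k + 1)) : Prop :=
  ∀ ℓ ∈ Q, treeTau P ℓ = 0 → ∀ w ∈ strictChainsIn {v ∈ P | v ≤ ℓ} n, f (Fin.snoc w ℓ) = F w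

structure IsPrunedCone (P : Set α) (t : α) (Q : Set α) (F : (Fin n → α) → Fin (k + 1)) :
    Prop where
  mem : t ∈ Q
  subset_Ici : Q ⊆ Ici t
  isTauCofinal : IsTauCofinal P Q
  factorsOnLeaves : FactorsOnLeaves f P Q F

lemma IsLevelAbove.exists_glued {A S : Set α} (hP : IsTree P) (hS : IsLevelAbove P A S)
    (hA : A.Finite) {Z : Set Ordinal.{u}} (hZ : ∀ z ∈ Z, ∃ s ∈ S, z ≤ treeTau P s)
    (hcone : ∀ s ∈ S, ∃ Q F, IsPrunedCone f P s Q F) :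
    ∃ Q F, IsTauCofinal P Q ∧ FactorsOnLeaves f P Q F ∧
      (∀ z ∈ Z, ∃ s ∈ S ∩ Q, z ≤ treeTau P s) ∧ ∀ x ∈ Q, ∃ s ∈ S, s ≤ x := by
  classical
  choose! C G hC using hcone
  have : Finite (strictChainsIn A n) := (finite_strictChainsIn hA).to_subtype
  obtain ⟨b, hb⟩ :=
    exists_cofinal_fiber (fun s (w : strictChainsIn A n) => G s w) (treeTau P) hZ
  set S' := {s ∈ S | (fun w : strictChainsIn A n => G s w) = b}
  -- Two of the kept cones share only chains inside `A`, where the `G s` coincide by choice of `b`.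
  have agree : ∀ s ∈ S', ∀ s' ∈ S', ∀ x ∈ C s, ∀ x' ∈ C s', ∀ w,
      w ∈ strictChainsIn {v ∈ P | v ≤ x} n → w ∈ strictChainsIn {v ∈ P | v ≤ x'} n →
      G s w = G s' w := by
    intro s hs s' hs' x hx x' hx' w hw hw'
    by_cases hss' : s = s'
    · rw [hss']
    have hwA : ∀ i, w i ∈ A := fun i =>
      (hS.eq_or_mem hP hs.1 hs'.1 ((hC s hs.1).isTauCofinal.1 hx)
        ((hC s' hs'.1).isTauCofinal.1 hx') ((hC s hs.1).subset_Ici hx)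
        ((hC s' hs'.1).subset_Ici hx') (hw.2 i).1 (hw.2 i).2 (hw'.2 i).2).resolve_left hss'
    exact congrFun (hs.2.trans hs'.2.symm) ⟨w, hw.1, hwA⟩
  refine ⟨⋃ s ∈ S', C s,
    fun w => if h : ∃ s ∈ S', ∃ x ∈ C s, w ∈ strictChainsIn {v ∈ P | v ≤ x} n
      then G h.choose w else 0,
    IsTauCofinal.biUnion fun s hs => (hC s hs.1).isTauCofinal, ?_, ?_, ?_⟩
  · intro ℓ hℓ hτ w hw
    obtain ⟨s, hs, hℓs⟩ := mem_iUnion₂.1 hℓ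
    have h : ∃ s ∈ S', ∃ x ∈ C s, w ∈ strictChainsIn {v ∈ P | v ≤ x} n := ⟨s, hs, ℓ, hℓs, hw⟩
    obtain ⟨hs₀, x, hx, hwx⟩ := h.choose_spec
    rw [(hC s hs.1).factorsOnLeaves ℓ hℓs hτ w hw]
    beta_reduce
    rw [dif_pos h]
    exact agree s hs _ hs₀ ℓ hℓs x hx w hw hwx
  · intro z hz
    obtain ⟨s, hs, hsb, hzs⟩ := hb z hz
    exact ⟨s, ⟨hs, mem_iUnion₂.2 ⟨s, ⟨hs, hsb⟩, (hC s hs).mem⟩⟩, hzs⟩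
  · intro x hx
    obtain ⟨s, hs, hxs⟩ := mem_iUnion₂.1 hx
    exact ⟨s, hs.1, (hC s hs.1).subset_Ici hxs⟩

lemma exists_isPrunedCone (hP : IsTree P) (hWF : IsWFTree P) {t : α} (ht : t ∈ P) :
    ∃ Q F, IsPrunedCone f P t Q F := by
  induction hτ : treeTau P t using WellFoundedLT.induction generalizing t with
  | _ o ih =>
    rcases eq_or_ne (treeTau P t) 0 with h0 | h0
    · refine ⟨{t}, fun w => f (Fin.snoc w t), rfl, singleton_subset_iff.2 le_rfl,
        ⟨singleton_subset_iff.2 ht, ?_⟩, ?_⟩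
      · rintro x rfl ζ hζ
        simp [h0] at hζ
      · rintro ℓ rfl - w -
        rfl
    obtain ⟨Q, F, hQ, hF, hcof, habove⟩ := (isLevelAbove_treeChildren t).exists_glued f hP
      (finite_ancestors hP hWF ht) (Z := Iio (treeTau P t))
      (fun _ hζ => exists_mem_treeChildren_le_treeTau hP hWF ht hζ)
      (fun s hs => ih _ (hτ ▸ strictAntiOn_treeTau hWF ht hs.1 hs.2.1) hs.1 rfl)
    refine ⟨insert t Q, F, mem_insert t Q, insert_subset le_rfl fun x hx => ?_,
      hQ.insert ht ?_, ?_⟩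
    · obtain ⟨s, hs, hsx⟩ := habove x hx
      exact (hs.2.1.trans_le hsx).le
    · intro ζ hζ
      obtain ⟨s, ⟨hs, hsQ⟩, hζs⟩ := hcof ζ hζ
      exact ⟨s, hsQ, hs.2.1, hζs⟩
    · rintro ℓ (rfl | hℓ) hτℓ
      · exact absurd hτℓ h0
      · exact hF ℓ hℓ hτℓ

lemma exists_isTauCofinal_factorsOnLeaves (hP : IsTree P) (hWF : IsWFTree P) :
    ∃ Q F, IsTauCofinal P Q ∧ FactorsOnLeaves f P Q F ∧
      ∀ t ∈ P, ∃ r ∈ Q, treeTau P t ≤ treeTau P r := by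
  have hroots : ∀ z ∈ treeTau P '' P, ∃ r ∈ {r | Minimal (· ∈ P) r}, z ≤ treeTau P r := by
    rintro _ ⟨t, ht, rfl⟩
    obtain ⟨r, hr, hrt⟩ := exists_minimal_le hP ht
    exact ⟨r, hr, (strictAntiOn_treeTau hWF).antitoneOn hr.1 ht hrt⟩
  obtain ⟨Q, F, hQ, hF, hcof, -⟩ := isLevelAbove_minimal.exists_glued f hP finite_empty hroots
    fun r hr => exists_isPrunedCone f hP hWF hr.1
  refine ⟨Q, F, hQ, hF, fun t ht => ?_⟩
  obtain ⟨r, ⟨-, hr⟩, htr⟩ := hcof _ (mem_image_of_mem _ ht)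
  exact ⟨r, hr, htr⟩

end Coloring

/-- for a well-founded tree `P` and a coloring `f` of
`E_n(P) = {(t_0,…,t_n) : t_0 < … < t_{n-1} ≤ t_n, t_n ∈ Leaves(P)}` by `k+1`
colors, there are a subtree `Q` of full rank with `τ_Q = τ_P|_Q` and a function
`F` on `Λ_n(Q)` with `F(t_0,…,t_{n-1}) = f(t_0,…,t_{n-1},t_n)` on `E_n(Q)`. -/
theorem statement14 {α : Type u} [PartialOrder α] (P : Set α) (hP : IsTree P)
    (hWF : IsWFTree P) (n k : ℕ) (f : (Fin (n + 1) → α) → Fin (k + 1)) :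
    ∃ Q ⊆ P, treeRank Q = treeRank P ∧ (∀ t ∈ Q, treeTau Q t = treeTau P t) ∧
      ∃ F : (Fin n → α) → Fin (k + 1),
        ∀ t : Fin (n + 1) → α, (∀ i, t i ∈ Q) →
          (∀ i j : Fin (n + 1), i < j → ((j : ℕ) < n → t i < t j) ∧ t i ≤ t j) →
          t (Fin.last n) ∈ treeLeaves Q →
          F (fun i => t i.castSucc) = f t := by
  obtain ⟨Q, F, hQ, hF, hcof⟩ := exists_isTauCofinal_factorsOnLeaves f hP hWF
  refine ⟨Q, hQ.1, hQ.treeRank_eq hWF hcof, fun t ht => hQ.treeTau_eq hWF ht, F,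
    fun t ht hchain hleaf => ?_⟩
  have hinit : Fin.init t ∈ strictChainsIn {v ∈ P | v ≤ t (Fin.last n)} n :=
    ⟨fun i j hij => (hchain _ _ (Fin.castSucc_lt_castSucc_iff.2 hij)).1 j.isLt,
      fun i => ⟨hQ.1 (ht _), (hchain _ _ (Fin.castSucc_lt_last i)).2⟩⟩
  have := hF _ hleaf.1 (hQ.treeTau_eq_zero hleaf) _ hinit
  rw [Fin.snoc_init_self] at this
  exact this.symm
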